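/- arXiv:1302.2576 — 5 statements merged into one kernel-verified Lean document; each statement's English description precedes it below -/
import Mathlib

section
/- Let d ≥ 1 and define the matrix C : Fin d → Fin d → ℝ by C i j = 1/(j+1) if i ≤ j and C i j = 0 otherwise (0-based indices, so column j has value 1/(j+1) in rows 0,…,j). If x : Fin d → ℝ lies in the standard simplex, then the vector y = C.mulVec x is descending, has nonnegative entries, and satisfies ∑ i, y i = 1; that is, y lies in the ordered (descending) simplex. -/
/-- The upper-triangular matrix `C` with `C i j = 1/(j+1)` for `i ≤ j` maps the
standard simplex into the ordered (descending) simplex. -/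
theorem C_mulVec_mem_ordered_simplex (d : ℕ) (hd : 1 ≤ d)
    (C : Matrix (Fin d) (Fin d) ℝ)
    (hC : ∀ i j : Fin d, C i j = if i ≤ j then 1 / ((j : ℕ) + 1 : ℝ) else 0)
    (x : Fin d → ℝ) (hx0 : ∀ j, 0 ≤ x j) (hx1 : ∑ j, x j = 1) :
    (∀ i j : Fin d, i ≤ j → C.mulVec x i ≥ C.mulVec x j) ∧
      (∀ i, 0 ≤ C.mulVec x i) ∧ ∑ i, C.mulVec x i = 1 := by
  have hterm : ∀ i j : Fin d, 0 ≤ C i j * x j := by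
    intro i j
    rw [hC]
    split
    · have := hx0 j; positivity
    · simp
  refine ⟨?_, ?_, ?_⟩
  · intro i j hij
    simp only [Matrix.mulVec, dotProduct, ge_iff_le]
    apply Finset.sum_le_sum
    intro k _
    rw [hC, hC]
    split <;> split
    · exact le_refl _
    · rename_i h1 h2; exact absurd (le_trans hij h1) h2
    · rw [zero_mul]; have := hx0 k; positivity
    · exact le_refl _
  · intro i
    simpa [Matrix.mulVec, dotProduct] using
      Finset.sum_nonneg fun j _ => hterm i j
  · simp only [Matrix.mulVec, dotProduct]
    rw [Finset.sum_comm]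
    rw [← hx1]
    apply Finset.sum_congr rfl
    intro j _
    have hcard : (Finset.univ.filter (fun i : Fin d => i ≤ j)).card = (j : ℕ) + 1 := by
      have : Finset.univ.filter (fun i : Fin d => i ≤ j) = Finset.Iic j := by
        ext i; simp
      rw [this, Fin.card_Iic]  -- hope this exists
    calc ∑ i, C i j * x j = (Finset.univ.filter (fun i : Fin d => i ≤ j)).card
          * (1 / ((j : ℕ) + 1 : ℝ)) * x j := by
            rw [← Finset.sum_mul]
            congr 1
            simp only [hC]
            rw [Finset.sum_ite, Finset.sum_const, Finset.sum_const_zero, add_zero,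
              nsmul_eq_mul]
      _ = x j := by
            rw [hcard]
            have : ((j : ℕ) + 1 : ℝ) ≠ 0 := by positivity
            push_cast
            field_simp
end

section
/- Let K be an n×n real positive definite matrix, let P be a t×n real matrix, and let σ > 0. Define f on n×n positive definite matrices by f(S) = −(1/(2σ²))·trace(P * S * Pᵀ) − (1/2)·trace(K⁻¹ * S) + (1/2)·Real.log (S.det). Then S* = (K⁻¹ + σ⁻² Pᵀ P)⁻¹ is positive definite, and S* is the unique maximizer of f over the set of positive definite matrices: f(S) ≤ f(S*) for every positive definite S, with equality only if S = S*. -/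
/-!
With `A = K⁻¹ + σ⁻² PᵀP`, which is positive definite, the objective is
`f S = (log det S - tr (A S)) / 2`. Factor `A = yᴴ y` with `y` invertible and put `M = y S yᴴ`,
again positive definite; then `log det S - tr (A S) = log det M - tr M - log det A`.
Summing `log λ ≤ λ - 1` over the eigenvalues of `M` gives `log det M ≤ tr M - n`, with equality
only when every eigenvalue is `1`, i.e. `M = 1`, i.e. `S = A⁻¹`.
-/

open Matrix

namespace Matrix

variable {ι : Type*} [Fintype ι] [DecidableEq ι]

theorem IsHermitian.eq_one_of_eigenvalues_eq_one {𝕜 : Type*} [RCLike 𝕜] {M : Matrix ι ι 𝕜}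
    (hM : M.IsHermitian) (h : hM.eigenvalues = 1) : M = 1 := by
  rw [hM.spectral_theorem, h]
  simp

theorem PosDef.log_det_eq_sum_log_eigenvalues {M : Matrix ι ι ℝ} (hM : M.PosDef) :
    Real.log M.det = ∑ i, Real.log (hM.isHermitian.eigenvalues i) := by
  rw [hM.isHermitian.det_eq_prod_eigenvalues, ← Real.log_prod fun i _ ↦ (hM.eigenvalues_pos i).ne']
  rfl

theorem PosDef.trace_sub_card_eq_sum_eigenvalues_sub_one {M : Matrix ι ι ℝ} (hM : M.PosDef) :
    M.trace - Fintype.card ι = ∑ i, (hM.isHermitian.eigenvalues i - 1) := by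
  simp [hM.isHermitian.trace_eq_sum_eigenvalues]

theorem PosDef.log_det_le_trace_sub_card {M : Matrix ι ι ℝ} (hM : M.PosDef) :
    Real.log M.det ≤ M.trace - Fintype.card ι := by
  rw [hM.log_det_eq_sum_log_eigenvalues, hM.trace_sub_card_eq_sum_eigenvalues_sub_one]
  exact Finset.sum_le_sum fun i _ ↦ Real.log_le_sub_one_of_pos (hM.eigenvalues_pos i)

theorem PosDef.log_det_eq_trace_sub_card_iff {M : Matrix ι ι ℝ} (hM : M.PosDef) :
    Real.log M.det = M.trace - Fintype.card ι ↔ M = 1 := by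
  refine ⟨fun h ↦ hM.isHermitian.eq_one_of_eigenvalues_eq_one <| funext fun i ↦ ?_, ?_⟩
  · rw [hM.log_det_eq_sum_log_eigenvalues, hM.trace_sub_card_eq_sum_eigenvalues_sub_one,
      Finset.sum_eq_sum_iff_of_le fun i _ ↦ Real.log_le_sub_one_of_pos (hM.eigenvalues_pos i)] at h
    by_contra hi
    exact (Real.log_lt_sub_one_of_pos (hM.eigenvalues_pos i) hi).ne (h i (Finset.mem_univ i))
  · rintro rfl
    simp


theorem log_det_sub_trace_star_mul_self_mul {y S : Matrix ι ι ℝ} (hy : IsUnit y)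
    (hS : S.PosDef) :
    Real.log S.det - (star y * y * S).trace =
      Real.log (y * S * star y).det - (y * S * star y).trace - Real.log (star y * y).det := by
  have hyy : 0 < (star y * y).det :=
    (PosDef.conjTranspose_mul_self y (mulVec_injective_of_isUnit hy)).det_pos
  have hdet : (y * S * star y).det = (star y * y).det * S.det := by
    simp only [det_mul]; ring
  rw [hdet, Real.log_mul hyy.ne' hS.det_pos.ne', trace_mul_cycle y]
  ring

theorem PosDef.log_det_sub_trace_mul_le {A S : Matrix ι ι ℝ} (hA : A.PosDef) (hS : S.PosDef) :
    Real.log S.det - (A * S).trace ≤ -Real.log A.det - Fintype.card ι := by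
  open scoped MatrixOrder in
  obtain ⟨y, hy, rfl⟩ :=
    CStarAlgebra.isStrictlyPositive_iff_eq_star_mul_self.mp hA.isStrictlyPositive
  rw [log_det_sub_trace_star_mul_self_mul hy hS]
  linarith [((IsUnit.posDef_star_right_conjugate_iff hy).mpr hS).log_det_le_trace_sub_card]

theorem PosDef.log_det_sub_trace_mul_eq_iff {A S : Matrix ι ι ℝ} (hA : A.PosDef)
    (hS : S.PosDef) :
    Real.log S.det - (A * S).trace = -Real.log A.det - Fintype.card ι ↔ S = A⁻¹ := by
  open scoped MatrixOrder in
  obtain ⟨y, hy, rfl⟩ :=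
    CStarAlgebra.isStrictlyPositive_iff_eq_star_mul_self.mp hA.isStrictlyPositive
  have hM := (IsUnit.posDef_star_right_conjugate_iff hy).mpr hS
  calc Real.log S.det - (star y * y * S).trace = -Real.log (star y * y).det - Fintype.card ι
      ↔ Real.log (y * S * star y).det = (y * S * star y).trace - Fintype.card ι := by
        rw [log_det_sub_trace_star_mul_self_mul hy hS]; constructor <;> intro h <;> linarith
    _ ↔ y * (S * star y) = 1 := by rw [hM.log_det_eq_trace_sub_card_iff, mul_assoc]
    _ ↔ star y * y * S = 1 := by rw [mul_eq_one_comm, mul_assoc, mul_eq_one_comm, mul_assoc]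
    _ ↔ S = (star y * y)⁻¹ :=
        ⟨fun h ↦ (inv_eq_right_inv h).symm, fun h ↦ h ▸ mul_nonsing_inv _ hA.det_pos.ne'.isUnit⟩

end Matrix

/-- The variational lower bound as a function of the covariance,
`f(S) = −(1/(2σ²))·tr(P S Pᵀ) − (1/2)·tr(K⁻¹ S) + (1/2)·log det S`,
is uniquely maximized over positive definite matrices by
`S* = (K⁻¹ + σ⁻² Pᵀ P)⁻¹`, which is itself positive definite. -/
theorem optimal_variational_covariance (n t : ℕ)
    (K : Matrix (Fin n) (Fin n) ℝ) (hK : K.PosDef)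
    (P : Matrix (Fin t) (Fin n) ℝ) (σ : ℝ) (hσ : 0 < σ) :
    let f : Matrix (Fin n) (Fin n) ℝ → ℝ := fun S =>
      -(1 / (2 * σ ^ 2)) * (P * S * Pᵀ).trace - (1 / 2) * (K⁻¹ * S).trace
        + (1 / 2) * Real.log S.det
    let Sstar : Matrix (Fin n) (Fin n) ℝ := (K⁻¹ + (σ ^ 2)⁻¹ • (Pᵀ * P))⁻¹
    Sstar.PosDef ∧
      ∀ S : Matrix (Fin n) (Fin n) ℝ, S.PosDef →
        f S ≤ f Sstar ∧ (f S = f Sstar → S = Sstar) := by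
  intro f Sstar
  set A := K⁻¹ + (σ ^ 2)⁻¹ • (Pᵀ * P)
  have hA : A.PosDef :=
    hK.inv.add_posSemidef ((posSemidef_conjTranspose_mul_self P).smul (by positivity))
  have hf : ∀ T, f T = (1 / 2) * (Real.log T.det - (A * T).trace) := fun T ↦ by
    simp only [f, A, add_mul, smul_mul_assoc, trace_add, trace_smul, trace_mul_cycle P,
      smul_eq_mul]
    field_simp
    ring
  have hfSstar : f Sstar = (1 / 2) * (-Real.log A.det - Fintype.card (Fin n)) := by
    rw [hf, mul_nonsing_inv A hA.det_pos.ne'.isUnit, det_nonsing_inv, Ring.inverse_eq_inv,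
      Real.log_inv, trace_one]
  refine ⟨hA.inv, fun S hS ↦ ⟨?_, fun h ↦ ?_⟩⟩
  · rw [hf, hfSstar]
    linarith [hA.log_det_sub_trace_mul_le hS]
  · rw [hf, hfSstar] at h
    exact (hA.log_det_sub_trace_mul_eq_iff hS).mp (by linarith)
end

section
/- The function S ↦ −Real.log (S.det) is strictly convex on the set of n×n real positive definite matrices: the set {S : Matrix (Fin n) (Fin n) ℝ | S.PosDef} is convex, and for distinct positive definite S₁, S₂ and t ∈ (0,1), −log det(t•S₁ + (1−t)•S₂) < −t·log det S₁ − (1−t)·log det S₂. -/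
/-!
Write `S₁ = P Pᴴ` and `S₂ = P D Pᴴ` with `D = diagonal μ`, `μ > 0` (take `P = S₁^{1/2} U`, where `U`
diagonalizes `S₁^{-1/2} S₂ S₁^{-1/2}`). Then `t S₁ + (1 - t) S₂ = P diagonal (t + (1 - t) μ) Pᴴ`, so
`log det` of it is `log det S₁ + ∑ᵢ log (t + (1 - t) μᵢ)`, and the inequality reduces to strict
concavity of `log` between `1` and `μᵢ`, with `μ ≠ 1` because `S₁ ≠ S₂`.
-/

open Matrix
open scoped ComplexOrder

namespace Matrix

variable {n 𝕜 : Type*} [RCLike 𝕜]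

theorem convex_setOf_posDef : Convex ℝ {S : Matrix n n 𝕜 | S.PosDef} := by
  intro S₁ hS₁ S₂ hS₂ a b ha hb hab
  rcases ha.eq_or_lt with rfl | ha
  · simp_all
  · exact (hS₁.smul ha).add_posSemidef (hS₂.posSemidef.smul hb)

variable [Fintype n] [DecidableEq n]

open scoped MatrixOrder in
theorem PosDef.exists_isUnit_eq_mul_conjTranspose {S : Matrix n n 𝕜} (hS : S.PosDef) :
    ∃ Q : Matrix n n 𝕜, IsUnit Q ∧ S = Q * Qᴴ := by
  have hS₀ : 0 ≤ S := hS.posSemidef.nonneg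
  refine ⟨CFC.sqrt S, (CFC.isUnit_sqrt_iff S).2 hS.isUnit, ?_⟩
  rw [(CFC.sqrt_nonneg S).posSemidef.1.eq, CFC.sqrt_mul_sqrt_self S]

theorem PosDef.exists_eq_unitary_mul_diagonal_mul_conjTranspose {M : Matrix n n 𝕜}
    (hM : M.PosDef) : ∃ (U : Matrix n n 𝕜) (μ : n → ℝ), U * Uᴴ = 1 ∧ (∀ i, 0 < μ i) ∧
      M = U * diagonal (fun i ↦ (μ i : 𝕜)) * Uᴴ :=
  ⟨_, _, Unitary.mul_star_self_of_mem hM.1.eigenvectorUnitary.2, hM.eigenvalues_pos,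
    hM.1.spectral_theorem⟩

theorem PosDef.exists_eq_mul_conjTranspose_and_eq_mul_diagonal_mul_conjTranspose
    {S T : Matrix n n 𝕜} (hS : S.PosDef) (hT : T.PosDef) :
    ∃ (P : Matrix n n 𝕜) (μ : n → ℝ), (∀ i, 0 < μ i) ∧
      S = P * Pᴴ ∧ T = P * diagonal (fun i ↦ (μ i : 𝕜)) * Pᴴ := by
  obtain ⟨Q, hQ, rfl⟩ := hS.exists_isUnit_eq_mul_conjTranspose
  have hQQ : Q * Q⁻¹ = 1 := mul_nonsing_inv Q ((isUnit_iff_isUnit_det Q).1 hQ)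
  have hM : (Q⁻¹ * T * Q⁻¹ᴴ).PosDef :=
    hT.mul_mul_conjTranspose_same (vecMul_injective_iff_isUnit.2 (isUnit_nonsing_inv_iff.2 hQ))
  obtain ⟨U, μ, hUU, hμ, hTU⟩ := hM.exists_eq_unitary_mul_diagonal_mul_conjTranspose
  refine ⟨Q * U, μ, hμ, ?_, ?_⟩
  · rw [conjTranspose_mul, Matrix.mul_assoc, ← Matrix.mul_assoc U, hUU, Matrix.one_mul]
  · calc T = Q * (Q⁻¹ * T * Q⁻¹ᴴ) * Qᴴ := by
          simp only [Matrix.mul_assoc]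
          rw [← conjTranspose_mul, hQQ, conjTranspose_one, Matrix.mul_one, ← Matrix.mul_assoc,
            hQQ, Matrix.one_mul]
      _ = _ := by simp only [hTU, conjTranspose_mul, Matrix.mul_assoc]

theorem det_mul_diagonal_mul {R : Type*} [CommRing R] (P Q : Matrix n n R) (d : n → R) :
    (P * diagonal d * Q).det = (P * Q).det * ∏ i, d i := by
  rw [det_mul, det_mul, det_mul, det_diagonal]
  ring

theorem log_det_mul_diagonal_mul {P Q : Matrix n n ℝ} {d : n → ℝ} (hPQ : (P * Q).det ≠ 0)
    (hd : ∀ i, d i ≠ 0) :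
    Real.log (P * diagonal d * Q).det = Real.log (P * Q).det + ∑ i, Real.log (d i) := by
  rw [det_mul_diagonal_mul, Real.log_mul hPQ (Finset.prod_ne_zero_iff.2 fun i _ ↦ hd i),
    Real.log_prod fun i _ ↦ hd i]

end Matrix

namespace Real

theorem one_sub_mul_log_le_log {x t : ℝ} (hx : 0 < x) (ht₀ : 0 ≤ t) (ht₁ : t ≤ 1) :
    (1 - t) * log x ≤ log (t + (1 - t) * x) := by
  simpa using strictConcaveOn_log_Ioi.concaveOn.2 (Set.mem_Ioi.2 one_pos) (Set.mem_Ioi.2 hx)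
    ht₀ (sub_nonneg.2 ht₁) (add_sub_cancel t 1)

theorem one_sub_mul_log_lt_log {x t : ℝ} (hx : 0 < x) (hx₁ : x ≠ 1) (ht₀ : 0 < t)
    (ht₁ : t < 1) : (1 - t) * log x < log (t + (1 - t) * x) := by
  simpa using strictConcaveOn_log_Ioi.2 (Set.mem_Ioi.2 one_pos) (Set.mem_Ioi.2 hx) hx₁.symm
    ht₀ (sub_pos.2 ht₁) (add_sub_cancel t 1)

theorem one_sub_mul_sum_log_lt_sum_log {n : Type*} [Fintype n] {μ : n → ℝ}
    (hμ : ∀ i, 0 < μ i) (hμ₁ : μ ≠ 1) {t : ℝ} (ht₀ : 0 < t) (ht₁ : t < 1) :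
    (1 - t) * ∑ i, log (μ i) < ∑ i, log (t + (1 - t) * μ i) := by
  obtain ⟨i, hi⟩ := Function.ne_iff.1 hμ₁
  rw [Finset.mul_sum]
  exact Finset.sum_lt_sum (fun j _ ↦ one_sub_mul_log_le_log (hμ j) ht₀.le ht₁.le)
    ⟨i, Finset.mem_univ i, one_sub_mul_log_lt_log (hμ i) hi ht₀ ht₁⟩

end Real

/-- The set of positive definite matrices is convex, and `S ↦ −log det S` is
strictly convex on it. -/
theorem neg_log_det_strictly_convex (n : ℕ) :
    Convex ℝ {S : Matrix (Fin n) (Fin n) ℝ | S.PosDef} ∧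
      ∀ S₁ S₂ : Matrix (Fin n) (Fin n) ℝ, S₁.PosDef → S₂.PosDef → S₁ ≠ S₂ →
        ∀ t : ℝ, 0 < t → t < 1 →
          -Real.log (t • S₁ + (1 - t) • S₂).det <
            -(t * Real.log S₁.det) - (1 - t) * Real.log S₂.det := by
  refine ⟨convex_setOf_posDef, fun S₁ S₂ hS₁ hS₂ hne t ht₀ ht₁ ↦ ?_⟩
  obtain ⟨P, μ, hμ, rfl, rfl⟩ :=
    hS₁.exists_eq_mul_conjTranspose_and_eq_mul_diagonal_mul_conjTranspose hS₂
  simp only [RCLike.ofReal_real_eq_id, id] at hne ⊢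
  have hμ₁ : μ ≠ 1 := by
    rintro rfl
    simp at hne
  have hcomb : t • (P * Pᴴ) + (1 - t) • (P * diagonal μ * Pᴴ) =
      P * diagonal (fun i ↦ t + (1 - t) * μ i) * Pᴴ :=
    calc _ = P * (t • 1 + (1 - t) • diagonal μ) * Pᴴ := by
          simp only [Matrix.mul_add, Matrix.add_mul, Matrix.mul_smul, Matrix.smul_mul,
            Matrix.mul_one]
      _ = _ := by rw [smul_one_eq_diagonal, ← diagonal_smul, diagonal_add]; rfl
  have hdet := hS₁.det_pos.ne'
  have hcomb_ne : ∀ i, t + (1 - t) * μ i ≠ 0 := fun i ↦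
    (add_pos ht₀ (mul_pos (sub_pos.2 ht₁) (hμ i))).ne'
  rw [hcomb, log_det_mul_diagonal_mul hdet hcomb_ne,
    log_det_mul_diagonal_mul hdet fun i ↦ (hμ i).ne']
  linarith [Real.one_sub_mul_sum_log_lt_sum_log hμ hμ₁ ht₀ ht₁]
end

section
/- Let d = d₁ + d₂, let z : Fin d → ℝ, and let a : Fin d₁ → ℝ and b : Fin d₂ → ℝ be given. Consider the (finite, assumed nonempty) feasible set F of vectors r : Fin d → ℝ such that the restriction of r to the first d₁ indices is a rearrangement (composition with a permutation) of a, the restriction to the last d₂ indices is a rearrangement of b, and r i ≥ r j whenever i is among the first d₁ indices and j among the last d₂ indices. Then any minimizer r* of ∑ i, (r i − z i)² over F is blockwise isotonic with z: for any two indices i, j lying both in the first block or both in the second block, z i > z j implies r* i ≥ r* j. -/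
/-- Blockwise isotonicity of the optimal permuted scores: any minimizer of the
squared distance to `z` over vectors whose first block is a rearrangement of
`a`, whose second block is a rearrangement of `b`, and whose first-block values
dominate the second-block values, is ordered consistently with `z` within each
block. -/
theorem minimizer_blockwise_isotonic (d₁ d₂ : ℕ)
    (z : Fin (d₁ + d₂) → ℝ) (a : Fin d₁ → ℝ) (b : Fin d₂ → ℝ)
    (F : Set (Fin (d₁ + d₂) → ℝ))
    (hF : F = {r | (∃ τ : Equiv.Perm (Fin d₁), ∀ i : Fin d₁, r (Fin.castAdd d₂ i) = a (τ i)) ∧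
        (∃ τ : Equiv.Perm (Fin d₂), ∀ j : Fin d₂, r (Fin.natAdd d₁ j) = b (τ j)) ∧
        (∀ i j : Fin (d₁ + d₂), (i : ℕ) < d₁ → d₁ ≤ (j : ℕ) → r i ≥ r j)})
    (hne : F.Nonempty)
    (rstar : Fin (d₁ + d₂) → ℝ) (hmem : rstar ∈ F)
    (hmin : ∀ r ∈ F, ∑ i, (rstar i - z i) ^ 2 ≤ ∑ i, (r i - z i) ^ 2)
    (i j : Fin (d₁ + d₂))
    (hblock : ((i : ℕ) < d₁ ∧ (j : ℕ) < d₁) ∨ (d₁ ≤ (i : ℕ) ∧ d₁ ≤ (j : ℕ)))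
    (hz : z i > z j) :
    rstar i ≥ rstar j := by
  by_contra hcon
  push_neg at hcon
  have hij : i ≠ j := fun h => absurd (h ▸ hz) (lt_irrefl _)
  set s : Equiv.Perm (Fin (d₁ + d₂)) := Equiv.swap i j with hs
  set r' : Fin (d₁ + d₂) → ℝ := fun k => rstar (s k) with hr'
  rw [hF] at hmem
  obtain ⟨⟨τ₁, hτ₁⟩, ⟨τ₂, hτ₂⟩, h3⟩ := hmem
  -- swap preserves the blocks
  have hs1 : ∀ p : Fin (d₁ + d₂), (p : ℕ) < d₁ → ((s p : ℕ) < d₁) := by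
    intro p hp
    rcases eq_or_ne p i with h | h
    · subst h
      rw [hs, Equiv.swap_apply_left]
      rcases hblock with ⟨h1, h2⟩ | ⟨h1, h2⟩
      · exact h2
      · omega
    · rcases eq_or_ne p j with h' | h'
      · subst h'
        rw [hs, Equiv.swap_apply_right]
        rcases hblock with ⟨h1, h2⟩ | ⟨h1, h2⟩
        · exact h1
        · omega
      · rw [hs, Equiv.swap_apply_of_ne_of_ne h h']
        exact hp
  have hs2 : ∀ q : Fin (d₁ + d₂), d₁ ≤ (q : ℕ) → d₁ ≤ ((s q : ℕ)) := by
    intro q hq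
    rcases eq_or_ne q i with h | h
    · subst h
      rw [hs, Equiv.swap_apply_left]
      rcases hblock with ⟨h1, h2⟩ | ⟨h1, h2⟩
      · omega
      · exact h2
    · rcases eq_or_ne q j with h' | h'
      · subst h'
        rw [hs, Equiv.swap_apply_right]
        rcases hblock with ⟨h1, h2⟩ | ⟨h1, h2⟩
        · omega
        · exact h1
      · rw [hs, Equiv.swap_apply_of_ne_of_ne h h']
        exact hq
  -- feasibility of r'
  have hr'F : r' ∈ F := by
    rw [hF]
    refine ⟨?_, ?_, ?_⟩
    · -- first block is a rearrangement of a
      rcases hblock with ⟨hi, hj⟩ | ⟨hi, hj⟩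
      · set i' : Fin d₁ := ⟨i, hi⟩ with hi'
        set j' : Fin d₁ := ⟨j, hj⟩ with hj'
        have hci : Fin.castAdd d₂ i' = i := Fin.ext rfl
        have hcj : Fin.castAdd d₂ j' = j := Fin.ext rfl
        have hinj : Function.Injective (Fin.castAdd d₂ : Fin d₁ → Fin (d₁ + d₂)) :=
          fun x y h => Fin.ext (by simpa using congrArg Fin.val h)
        refine ⟨(Equiv.swap i' j').trans τ₁, fun k => ?_⟩
        have : s (Fin.castAdd d₂ k) = Fin.castAdd d₂ (Equiv.swap i' j' k) := by
          rw [hs, ← hci, ← hcj, hinj.swap_apply]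
        simp only [hr', this, hτ₁, Equiv.trans_apply]
      · refine ⟨τ₁, fun k => ?_⟩
        have hk : (Fin.castAdd d₂ k : Fin (d₁ + d₂)) ≠ i := by
          intro h
          have := congrArg Fin.val h
          simp at this
          omega
        have hk' : (Fin.castAdd d₂ k : Fin (d₁ + d₂)) ≠ j := by
          intro h
          have := congrArg Fin.val h
          simp at this
          omega
        simp only [hr', hs, Equiv.swap_apply_of_ne_of_ne hk hk', hτ₁]
    · -- second block is a rearrangement of b
      rcases hblock with ⟨hi, hj⟩ | ⟨hi, hj⟩
      · refine ⟨τ₂, fun k => ?_⟩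
        have hk : (Fin.natAdd d₁ k : Fin (d₁ + d₂)) ≠ i := by
          intro h
          have := congrArg Fin.val h
          simp at this
          omega
        have hk' : (Fin.natAdd d₁ k : Fin (d₁ + d₂)) ≠ j := by
          intro h
          have := congrArg Fin.val h
          simp at this
          omega
        simp only [hr', hs, Equiv.swap_apply_of_ne_of_ne hk hk', hτ₂]
      · set i' : Fin d₂ := ⟨(i : ℕ) - d₁, by omega⟩ with hi'
        set j' : Fin d₂ := ⟨(j : ℕ) - d₁, by omega⟩ with hj'
        have hci : Fin.natAdd d₁ i' = i := Fin.ext (by simp [hi']; omega)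
        have hcj : Fin.natAdd d₁ j' = j := Fin.ext (by simp [hj']; omega)
        have hinj : Function.Injective (Fin.natAdd d₁ : Fin d₂ → Fin (d₁ + d₂)) :=
          fun x y h => Fin.ext (by have := congrArg Fin.val h; simp at this; omega)
        refine ⟨(Equiv.swap i' j').trans τ₂, fun k => ?_⟩
        have : s (Fin.natAdd d₁ k) = Fin.natAdd d₁ (Equiv.swap i' j' k) := by
          rw [hs, ← hci, ← hcj, hinj.swap_apply]
        simp only [hr', this, hτ₂, Equiv.trans_apply]
    · intro p q hp hq
      exact h3 (s p) (s q) (hs1 p hp) (hs2 q hq)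
  -- strict decrease of the objective
  have hsub : ({i, j} : Finset (Fin (d₁ + d₂))) ⊆ Finset.univ := Finset.subset_univ _
  have key : ∀ f : Fin (d₁ + d₂) → ℝ,
      ∑ k, f k = ∑ k ∈ Finset.univ \ {i, j}, f k + (f i + f j) := by
    intro f
    rw [← Finset.sum_sdiff hsub, Finset.sum_pair hij]
  have hsame : ∑ k ∈ Finset.univ \ {i, j}, (r' k - z k) ^ 2
      = ∑ k ∈ Finset.univ \ {i, j}, (rstar k - z k) ^ 2 := by
    refine Finset.sum_congr rfl fun k hk => ?_
    simp only [Finset.mem_sdiff, Finset.mem_insert, Finset.mem_singleton] at hk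
    push_neg at hk
    rw [hr']
    simp only [hs, Equiv.swap_apply_of_ne_of_ne hk.2.1 hk.2.2]
  have hri : r' i = rstar j := by simp [hr', hs]
  have hrj : r' j = rstar i := by simp [hr', hs]
  have hlt : ∑ k, (r' k - z k) ^ 2 < ∑ k, (rstar k - z k) ^ 2 := by
    rw [key (fun k => (r' k - z k) ^ 2), key (fun k => (rstar k - z k) ^ 2), hsame,
      hri, hrj]
    have := mul_pos (sub_pos.2 hcon) (sub_pos.2 hz)
    nlinarith [this]
  exact absurd (hmin r' hr'F) (not_le.2 hlt)
end

section
/- Let K be an n×n real positive definite matrix, P a t×n real matrix, and σ > 0. Define F(r, ψ, S) = (1/(2σ²))·‖r − P.mulVec ψ‖² + (1/(2σ²))·trace(P * S * Pᵀ) + (1/2)·⟪ψ, K⁻¹.mulVec ψ⟫ + (1/2)·trace(K⁻¹ * S) − (1/2)·Real.log (S.det). Then F is jointly convex on ℝᵗ × ℝⁿ × {S : Matrix (Fin n) (Fin n) ℝ | S.PosDef}: this domain is a convex set and F satisfies the convexity inequality for convex combinations of any two points in it. -/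
/-!
`F` is a nonnegative combination of convex functions of `(r, ψ, S)`: positive semidefinite
quadratic forms composed with linear maps (the residual `r - Pψ` and the prior term in `ψ`),
two linear functions of `S` (the traces), and `-log det S`.

Concavity of `log det` on the positive definite cone: writing `A = Rᴴ R` with `R` invertible,
`a A + b B = Rᴴ (a 1 + b C) R` for `C = R⁻ᴴ B R⁻¹`, so it reduces to
`b log det C ≤ log det (a 1 + b C)`; diagonalising `C`, this is concavity of `log` at each
eigenvalue.
-/

open Matrix Set

namespace Matrix

variable {n : Type*}

lemma convex_setOf_posDef_s16 : Convex ℝ {A : Matrix n n ℝ | A.PosDef} :=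
  convex_iff_forall_pos.mpr fun _ hA _ hB _ _ ha hb _ => (hA.smul ha).add (hB.smul hb)

variable [Fintype n]

lemma PosSemidef.convexOn_dotProduct_mulVec {M : Matrix n n ℝ} (hM : M.PosSemidef) :
    ConvexOn ℝ univ fun x : n → ℝ => x ⬝ᵥ M *ᵥ x := by
  refine ⟨convex_univ, fun x _ y _ a b ha hb hab => ?_⟩
  have hsymm : y ⬝ᵥ M *ᵥ x = x ⬝ᵥ M *ᵥ y := by
    rw [dotProduct_mulVec, dotProduct_comm, ← mulVec_transpose,
      ← conjTranspose_eq_transpose_of_trivial, hM.1.eq]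
  -- the convexity gap is `a b (x - y)ᵀ M (x - y)`
  have hgap := mul_nonneg (mul_nonneg ha hb) (hM.dotProduct_mulVec_nonneg (x - y))
  simp only [star_trivial, smul_eq_mul, mulVec_add, mulVec_sub, mulVec_smul, dotProduct_add,
    add_dotProduct, dotProduct_sub, sub_dotProduct, dotProduct_smul, smul_dotProduct,
    hsymm] at hgap ⊢
  obtain rfl : b = 1 - a := by linarith
  linear_combination hgap

variable [DecidableEq n]

lemma IsHermitian.det_smul_one_add_smul {C : Matrix n n ℝ} (hC : C.IsHermitian) (a b : ℝ) :
    (a • 1 + b • C).det = ∏ i, (a + b * hC.eigenvalues i) := by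
  set φ := Unitary.conjStarAlgAut ℝ _ hC.eigenvectorUnitary
  have hdiag : a • 1 + b • C = φ (diagonal fun i => a + b * hC.eigenvalues i) := by
    conv_lhs => rw [hC.spectral_theorem]
    rw [← map_one φ, ← map_smul, ← map_smul, ← map_add]
    congr 1
    ext i j
    rcases eq_or_ne i j with rfl | h <;> simp [*]
  rw [hdiag, det_map, det_diagonal]

lemma PosDef.mul_log_det_le_log_det_smul_one_add_smul {C : Matrix n n ℝ} (hC : C.PosDef)
    {a b : ℝ} (ha : 0 ≤ a) (hb : 0 ≤ b) (hab : a + b = 1) :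
    b * Real.log C.det ≤ Real.log (a • 1 + b • C).det := by
  have hμ : ∀ i, hC.1.eigenvalues i ∈ Ioi 0 := hC.eigenvalues_pos
  have hlog := fun i => strictConcaveOn_log_Ioi.concaveOn.2 (mem_Ioi.2 one_pos) (hμ i) ha hb hab
  have hpos := fun i => convex_Ioi (0 : ℝ) (mem_Ioi.2 one_pos) (hμ i) ha hb hab
  simp only [smul_eq_mul, mul_one, Real.log_one, mul_zero, zero_add, mem_Ioi] at hlog hpos
  rw [hC.1.det_smul_one_add_smul, hC.1.det_eq_prod_eigenvalues]
  simp only [RCLike.ofReal_real_eq_id, id_eq]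
  rw [Real.log_prod fun i _ => (hμ i).ne', Real.log_prod fun i _ => (hpos i).ne', Finset.mul_sum]
  exact Finset.sum_le_sum fun i _ => hlog i

open scoped MatrixOrder in
theorem concaveOn_log_det :
    ConcaveOn ℝ {A : Matrix n n ℝ | A.PosDef} fun A => Real.log A.det := by
  refine ⟨convex_setOf_posDef_s16, fun A hA B hB a b ha hb hab => ?_⟩
  obtain ⟨R, hR, rfl⟩ :=
    CStarAlgebra.isStrictlyPositive_iff_eq_star_mul_self.mp hA.isStrictlyPositive
  set C := star R⁻¹ * B * R⁻¹
  have hC : C.PosDef :=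
    (IsUnit.posDef_star_left_conjugate_iff (isUnit_nonsing_inv_iff.mpr hR)).mpr hB
  have hBC : B = star R * C * R := by
    have hRR : R⁻¹ * R = 1 := nonsing_inv_mul R ((isUnit_iff_isUnit_det R).mp hR)
    simp only [C, ← mul_assoc, ← star_mul, hRR, star_one, one_mul]
    simp only [mul_assoc, hRR, mul_one]
  have hdet : ∀ X, (star R * X * R).det = (star R * R).det * X.det := by
    intro X; simp only [det_mul]; ring
  have hcomb : a • (star R * R) + b • B = star R * (a • 1 + b • C) * R := by
    rw [hBC, mul_add, add_mul, Matrix.mul_smul, Matrix.smul_mul, mul_one, Matrix.mul_smul,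
      Matrix.smul_mul]
  have hconv := hC.mul_log_det_le_log_det_smul_one_add_smul ha hb hab
  have hpos := (convex_setOf_posDef_s16 PosDef.one hC ha hb hab).det_pos
  dsimp only
  rw [hcomb, hBC, hdet, hdet, Real.log_mul hA.det_pos.ne' hC.det_pos.ne',
    Real.log_mul hA.det_pos.ne' hpos.ne', smul_eq_mul, smul_eq_mul]
  linear_combination hconv + Real.log (star R * R).det * hab

end Matrix

lemma convexOn_sum_sq {ι : Type*} [Fintype ι] :
    ConvexOn ℝ univ fun x : ι → ℝ => ∑ i, x i ^ 2 := by
  classical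
  simpa [dotProduct, sq] using (PosSemidef.one (n := ι) (R := ℝ)).convexOn_dotProduct_mulVec

theorem variational_objective_jointly_convex_general (n t : ℕ)
    (K : Matrix (Fin n) (Fin n) ℝ) (hK : K.PosDef)
    (P : Matrix (Fin t) (Fin n) ℝ) (σ : ℝ) :
    let F : (Fin t → ℝ) × (Fin n → ℝ) × Matrix (Fin n) (Fin n) ℝ → ℝ := fun p =>
      (1 / (2 * σ ^ 2)) * (∑ i, (p.1 i - P.mulVec p.2.1 i) ^ 2)
        + (1 / (2 * σ ^ 2)) * (P * p.2.2 * Pᵀ).trace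
        + (1 / 2) * (∑ i, p.2.1 i * K⁻¹.mulVec p.2.1 i)
        + (1 / 2) * (K⁻¹ * p.2.2).trace
        - (1 / 2) * Real.log p.2.2.det
    let D : Set ((Fin t → ℝ) × (Fin n → ℝ) × Matrix (Fin n) (Fin n) ℝ) :=
      {p | p.2.2.PosDef}
    Convex ℝ D ∧ ConvexOn ℝ D F := by
  intro F D
  let r := LinearMap.fst ℝ (Fin t → ℝ) ((Fin n → ℝ) × Matrix (Fin n) (Fin n) ℝ)
  let ψ := LinearMap.fst ℝ (Fin n → ℝ) (Matrix (Fin n) (Fin n) ℝ) ∘ₗ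
    LinearMap.snd ℝ (Fin t → ℝ) ((Fin n → ℝ) × Matrix (Fin n) (Fin n) ℝ)
  let S := LinearMap.snd ℝ (Fin n → ℝ) (Matrix (Fin n) (Fin n) ℝ) ∘ₗ
    LinearMap.snd ℝ (Fin t → ℝ) ((Fin n → ℝ) × Matrix (Fin n) (Fin n) ℝ)
  have hD : Convex ℝ D := convex_setOf_posDef_s16.linear_preimage S
  have hcoef : (0 : ℝ) ≤ 1 / (2 * σ ^ 2) := by positivity
  have hhalf : (0 : ℝ) ≤ 1 / 2 := by norm_num
  have hres :=
    (convexOn_sum_sq.comp_linearMap (r - P.mulVecLin ∘ₗ ψ)).subset (subset_univ D) hD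
  have htr₁ := (traceLinearMap _ ℝ ℝ ∘ₗ mulRightLinearMap _ ℝ Pᵀ ∘ₗ
    mulLeftLinearMap _ ℝ P ∘ₗ S).convexOn hD
  have hquad :=
    (hK.inv.posSemidef.convexOn_dotProduct_mulVec.comp_linearMap ψ).subset (subset_univ D) hD
  have htr₂ := (traceLinearMap _ ℝ ℝ ∘ₗ mulLeftLinearMap _ ℝ K⁻¹ ∘ₗ S).convexOn hD
  have hlog := concaveOn_log_det.comp_linearMap S
  exact ⟨hD, ((((hres.smul hcoef).add (htr₁.smul hcoef)).add (hquad.smul hhalf)).add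
    (htr₂.smul hhalf)).sub (hlog.smul hhalf)⟩

/-- Joint convexity of variational inference and maximum likelihood parameter
estimation: the objective
`F(r, ψ, S) = (1/(2σ²))·‖r − Pψ‖² + (1/(2σ²))·tr(P S Pᵀ) + (1/2)·⟪ψ, K⁻¹ψ⟫
+ (1/2)·tr(K⁻¹ S) − (1/2)·log det S` is convex on
`ℝᵗ × ℝⁿ × {positive definite matrices}`, which is a convex set. -/
theorem variational_objective_jointly_convex (n t : ℕ)
    (K : Matrix (Fin n) (Fin n) ℝ) (hK : K.PosDef)
    (P : Matrix (Fin t) (Fin n) ℝ) (σ : ℝ) (hσ : 0 < σ) :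
    let F : (Fin t → ℝ) × (Fin n → ℝ) × Matrix (Fin n) (Fin n) ℝ → ℝ := fun p =>
      (1 / (2 * σ ^ 2)) * (∑ i, (p.1 i - P.mulVec p.2.1 i) ^ 2)
        + (1 / (2 * σ ^ 2)) * (P * p.2.2 * Pᵀ).trace
        + (1 / 2) * (∑ i, p.2.1 i * K⁻¹.mulVec p.2.1 i)
        + (1 / 2) * (K⁻¹ * p.2.2).trace
        - (1 / 2) * Real.log p.2.2.det
    let D : Set ((Fin t → ℝ) × (Fin n → ℝ) × Matrix (Fin n) (Fin n) ℝ) :=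
      {p | p.2.2.PosDef}
    Convex ℝ D ∧ ConvexOn ℝ D F :=
  variational_objective_jointly_convex_general n t K hK P σ
end
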